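/- arXiv:2404.07958 — 2 statements merged into one kernel-verified Lean document; each statement's English description precedes it below -/
import Mathlib

section
/- The number of parking functions of size n whose parking permutation avoids 123, 132, and 231 equals the binomial coefficient binom(n+1, 2). -/
open Finset

noncomputable section

/-- The parking process over the first `k` cars (cars are `0,...,k-1`, i.e. cars `1,...,k`
in 1-indexed terms): returns `some occ` where `occ` maps each spot to the car parked there
(`none` meaning empty), or `none` if some car failed to park.  Car `c` drives to its
preferred spot `f c` and parks at the first free spot with index `≥ f c`, failing if
no such spot exists. -/
def parkAux {n : ℕ} (f : Fin n → Fin n) : ℕ → Option (Fin n → Option (Fin n))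
  | 0 => some fun _ => none
  | k + 1 =>
    (parkAux f k).bind fun occ =>
      if h : k < n then
        if hS : (Finset.univ.filter fun s => f ⟨k, h⟩ ≤ s ∧ occ s = none).Nonempty then
          some (Function.update occ
            ((Finset.univ.filter fun s => f ⟨k, h⟩ ≤ s ∧ occ s = none).min' hS)
            (some ⟨k, h⟩))
        else none
      else some occ

/-- All `n` cars park successfully. -/
def AllPark {n : ℕ} (f : Fin n → Fin n) : Prop := (parkAux f n).isSome

/-- `f` is a parking function: for every `i ∈ [n]`, at least `i` cars prefer
the first `i` spots.  (Here `i : Fin n` denotes the `(i+1)`-st spot, 0-indexed.) -/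
def IsParkingFunction {n : ℕ} (f : Fin n → Fin n) : Prop :=
  ∀ i : Fin n, i.val + 1 ≤ (Finset.univ.filter fun j => f j ≤ i).card

/-- `ρ` is the parking permutation of `f`: after all cars have parked,
spot `i` is occupied by car `ρ i`. -/
def IsParkingPerm {n : ℕ} (f : Fin n → Fin n) (ρ : Equiv.Perm (Fin n)) : Prop :=
  parkAux f n = some fun i => some (ρ i)

/-- `π` contains `σ` as a pattern. -/
def ContainsPattern {n m : ℕ} (π : Equiv.Perm (Fin n)) (σ : Equiv.Perm (Fin m)) : Prop :=
  ∃ g : Fin m → Fin n, StrictMono g ∧ ∀ a b : Fin m, σ a < σ b ↔ π (g a) < π (g b)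

/-- `ρ` avoids every pattern in the list `pats`. -/
def AvoidsAll {n : ℕ} (ρ : Equiv.Perm (Fin n)) (pats : List (Equiv.Perm (Fin 3))) : Prop :=
  ∀ σ ∈ pats, ¬ ContainsPattern ρ σ

/-- The number of parking functions of size `n` whose parking permutation avoids
all patterns in `pats`. -/
def pk (n : ℕ) (pats : List (Equiv.Perm (Fin 3))) : ℕ :=
  Nat.card {f : Fin n → Fin n // IsParkingFunction f ∧
    ∃ ρ : Equiv.Perm (Fin n), IsParkingPerm f ρ ∧ AvoidsAll ρ pats}

def p123 : Equiv.Perm (Fin 3) := Equiv.ofBijective ![0, 1, 2] (by decide)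
def p132 : Equiv.Perm (Fin 3) := Equiv.ofBijective ![0, 2, 1] (by decide)
def p213 : Equiv.Perm (Fin 3) := Equiv.ofBijective ![1, 0, 2] (by decide)
def p231 : Equiv.Perm (Fin 3) := Equiv.ofBijective ![1, 2, 0] (by decide)
def p312 : Equiv.Perm (Fin 3) := Equiv.ofBijective ![2, 0, 1] (by decide)
def p321 : Equiv.Perm (Fin 3) := Equiv.ofBijective ![2, 1, 0] (by decide)

/-!
A function parks its cars with outcome `ρ` exactly when every car `c` prefers a spot at or
before its final spot `ρ⁻¹ c` and all spots in between are taken by earlier cars; in particular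
it is then a parking function, and `ρ` is determined by it. A permutation avoids 123, 132 and
231 exactly when it is decreasing on all spots but the last, so there is exactly one such
permutation for each value `j` of its last entry. For that permutation the left neighbour of
every car other than `j` is a later car, which pins down the preference of that car, while car
`j` may prefer any of the last `j + 1` spots, since the `j` spots just before its own hold
exactly the cars smaller than `j`. Summing `j + 1` over `j` gives `binom(n+1, 2)`.
-/

open Equiv

theorem Nat.card_exists_and_eq_card_sigma {α β : Type*} {P : α → β → Prop} {Q : β → Prop}
    (huniq : ∀ a b b', P a b → P a b' → b = b') :
    Nat.card {a // ∃ b, P a b ∧ Q b} = Nat.card (Σ b : {b // Q b}, {a // P a b}) := by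
  refine (Nat.card_congr (Equiv.ofBijective (fun x => ⟨x.2.1, x.1.1, x.2.2, x.1.2⟩)
    ⟨?_, ?_⟩)).symm
  · rintro ⟨⟨b, hb⟩, ⟨a, ha⟩⟩ ⟨⟨b', hb'⟩, ⟨a', ha'⟩⟩ h
    obtain rfl : a = a' := congrArg Subtype.val h
    obtain rfl := huniq a b b' ha ha'
    rfl
  · rintro ⟨a, b, hab, hb⟩
    exact ⟨⟨⟨b, hb⟩, ⟨a, hab⟩⟩, rfl⟩

theorem Fin.sum_val_add_one_eq_choose (n : ℕ) :
    ∑ j : Fin n, ((j : ℕ) + 1) = (n + 1).choose 2 := by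
  rw [Fin.sum_univ_eq_sum_range (· + 1), Nat.choose_two_right, ← Finset.sum_range_id,
    Finset.sum_range_succ']
  rfl

theorem Equiv.Perm.eq_of_strictAntiOn {α : Type*} [LinearOrder α] [WellFoundedLT α] {S : Set α}
    {ρ ρ' : Perm α} (h : StrictAntiOn ρ S) (h' : StrictAntiOn ρ' S) (hc : Set.EqOn ρ ρ' Sᶜ) :
    ρ = ρ' := by
  have key : ∀ {ρ ρ' : Perm α}, StrictAntiOn ρ S → Set.EqOn ρ ρ' Sᶜ →
      ∀ s, (∀ t < s, ρ t = ρ' t) → ¬ ρ s < ρ' s := by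
    intro ρ ρ' h hc s hlt hs
    have hsS : s ∈ S := by
      by_contra hsS
      exact hs.ne (hc hsS)
    obtain ⟨t, ht⟩ := ρ.surjective (ρ' s)
    rcases lt_trichotomy t s with hts | rfl | hst
    · exact hts.ne (ρ'.injective ((hlt t hts).symm.trans ht))
    · exact hs.ne ht
    · by_cases htS : t ∈ S
      · exact ((h hsS htS hst).trans hs).ne ht
      · exact hst.ne' (ρ'.injective ((hc htS).symm.trans ht))
  ext s
  induction s using WellFoundedLT.induction with
  | ind s ih =>
    rcases lt_trichotomy (ρ s) (ρ' s) with hlt | heq | hgt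
    · exact absurd hlt (key h hc s ih)
    · rw [heq]
    · exact absurd hgt (key h' hc.symm s fun t ht => (ih t ht).symm)

section Parking

variable {n : ℕ} (f : Fin n → Fin n)

def freeSpotsFrom (o : Fin n → Option (Fin n)) (a : Fin n) : Finset (Fin n) :=
  univ.filter fun s => a ≤ s ∧ o s = none

lemma parkAux_succ_of_lt {k : ℕ} (hk : k < n) {o : Fin n → Option (Fin n)}
    (h : parkAux f k = some o) :
    parkAux f (k + 1) =
      if hS : (freeSpotsFrom o (f ⟨k, hk⟩)).Nonempty then
        some (Function.update o ((freeSpotsFrom o (f ⟨k, hk⟩)).min' hS) (some ⟨k, hk⟩))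
      else none := by
  simp only [parkAux, h, Option.bind_some, dif_pos hk]
  rfl

lemma exists_parkAux_eq_some_of_succ {k : ℕ} {o' : Fin n → Option (Fin n)}
    (h : parkAux f (k + 1) = some o') :
    ∃ o, parkAux f k = some o ∧ ∀ s c, o s = some c → o' s = some c := by
  cases hk : parkAux f k with
  | none => simp [parkAux, hk] at h
  | some o =>
    refine ⟨o, rfl, fun s c hs => ?_⟩
    by_cases hkn : k < n
    · rw [parkAux_succ_of_lt f hkn hk] at h
      split_ifs at h with hS
      cases h
      have hmin := (Finset.mem_filter.mp ((freeSpotsFrom o (f ⟨k, hkn⟩)).min'_mem hS)).2.2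
      rw [Function.update_of_ne (by rintro rfl; simp [hs] at hmin)]
      exact hs
    · simp only [parkAux, hk, Option.bind_some, dif_neg hkn, Option.some.injEq] at h
      exact h ▸ hs

lemma exists_parkAux_eq_some_of_le {k l : ℕ} (hkl : k ≤ l) {o' : Fin n → Option (Fin n)}
    (h : parkAux f l = some o') :
    ∃ o, parkAux f k = some o ∧ ∀ s c, o s = some c → o' s = some c := by
  induction l, hkl using Nat.le_induction generalizing o' with
  | base => exact ⟨o', h, fun _ _ => id⟩
  | succ l _ ih =>
    obtain ⟨o₁, h₁, hle₁⟩ := exists_parkAux_eq_some_of_succ f h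
    obtain ⟨o, h, hle⟩ := ih h₁
    exact ⟨o, h, fun s c hs => hle₁ s c (hle s c hs)⟩

def occupancyBelow (ρ : Perm (Fin n)) (k : ℕ) : Fin n → Option (Fin n) :=
  fun s => if (ρ s : ℕ) < k then some (ρ s) else none

def ParksAt (ρ : Perm (Fin n)) (c : Fin n) : Prop :=
  f c ≤ ρ.symm c ∧ ∀ s, f c ≤ s → s < ρ.symm c → ρ s < c

variable {f}

lemma parkAux_succ_eq_occupancyBelow {ρ : Perm (Fin n)} {k : ℕ} (hk : k < n)
    (h : parkAux f k = some (occupancyBelow ρ k)) (hc : ParksAt f ρ ⟨k, hk⟩) :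
    parkAux f (k + 1) = some (occupancyBelow ρ (k + 1)) := by
  set c : Fin n := ⟨k, hk⟩
  have hfree : ∀ s, s ∈ freeSpotsFrom (occupancyBelow ρ k) (f c) ↔ f c ≤ s ∧ k ≤ ρ s := by
    intro s
    simp [freeSpotsFrom, occupancyBelow]
  have hmem : ρ.symm c ∈ freeSpotsFrom (occupancyBelow ρ k) (f c) := by
    simp [hfree, hc.1, c]
  have hmin : ∀ s ∈ freeSpotsFrom (occupancyBelow ρ k) (f c), ρ.symm c ≤ s := by
    intro s hs
    rw [hfree] at hs
    by_contra! hlt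
    exact absurd (hc.2 s hs.1 hlt) (not_lt.mpr hs.2)
  rw [parkAux_succ_of_lt f hk h, dif_pos ⟨_, hmem⟩,
    le_antisymm (Finset.min'_le _ _ hmem) (Finset.le_min' _ _ _ hmin)]
  congr 1
  funext s
  rcases eq_or_ne s (ρ.symm c) with rfl | hs
  · simp [occupancyBelow, c]
  · have : (ρ s : ℕ) ≠ k := fun h => hs (by rw [Equiv.eq_symm_apply]; exact Fin.ext h)
    simp only [Function.update_of_ne hs, occupancyBelow]
    congr 1
    exact propext (by omega)

lemma ParksAt.of_isParkingPerm {ρ : Perm (Fin n)} (hρ : IsParkingPerm f ρ) {k : ℕ} (hk : k < n)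
    (h : parkAux f k = some (occupancyBelow ρ k)) : ParksAt f ρ ⟨k, hk⟩ := by
  set c : Fin n := ⟨k, hk⟩
  obtain ⟨o, ho, hpersist⟩ := exists_parkAux_eq_some_of_le f hk hρ
  rw [parkAux_succ_of_lt f hk h] at ho
  split_ifs at ho with hS
  set m := (freeSpotsFrom (occupancyBelow ρ k) (f c)).min' hS
  have hm : m = ρ.symm c := by
    have := hpersist m c (by rw [← Option.some_inj.mp ho]; simp [c])
    rw [Equiv.eq_symm_apply]
    exact Option.some_inj.mp this
  have hmem := Finset.mem_filter.mp (Finset.min'_mem _ hS)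
  refine ⟨hm ▸ hmem.2.1, fun s hfs hsm => ?_⟩
  have hs : s ∉ freeSpotsFrom (occupancyBelow ρ k) (f c) :=
    fun hs => absurd (Finset.min'_le _ _ hs) (not_le.mpr (hsm.trans_eq hm.symm))
  simp only [freeSpotsFrom, occupancyBelow, Finset.mem_filter, Finset.mem_univ, true_and,
    not_and, ite_eq_right_iff, reduceCtorEq, imp_false, not_not] at hs
  exact hs hfs

lemma occupancyBelow_zero (ρ : Perm (Fin n)) : occupancyBelow ρ 0 = fun _ => none := by
  funext s; simp [occupancyBelow]

lemma occupancyBelow_self (ρ : Perm (Fin n)) : occupancyBelow ρ n = fun s => some (ρ s) := by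
  funext s; simp [occupancyBelow]

lemma parkAux_eq_occupancyBelow {ρ : Perm (Fin n)}
    (hstep : ∀ k (hk : k < n), parkAux f k = some (occupancyBelow ρ k) → ParksAt f ρ ⟨k, hk⟩) :
    ∀ k ≤ n, parkAux f k = some (occupancyBelow ρ k) := by
  intro k hk
  induction k with
  | zero => rw [occupancyBelow_zero]; rfl
  | succ k ih =>
    have h := ih (by omega)
    exact parkAux_succ_eq_occupancyBelow (by omega) h (hstep k (by omega) h)

theorem isParkingPerm_iff {ρ : Perm (Fin n)} : IsParkingPerm f ρ ↔ ∀ c, ParksAt f ρ c := by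
  constructor
  · intro hρ c
    have hstep := fun k hk => ParksAt.of_isParkingPerm hρ (k := k) hk
    exact hstep c c.isLt (parkAux_eq_occupancyBelow hstep c c.isLt.le)
  · intro hc
    rw [IsParkingPerm, parkAux_eq_occupancyBelow (fun _ _ _ => hc _) n le_rfl,
      occupancyBelow_self]

theorem IsParkingPerm.isParkingFunction {ρ : Perm (Fin n)} (hρ : IsParkingPerm f ρ) :
    IsParkingFunction f := by
  intro i
  have himage : (univ.filter fun c => ρ.symm c ≤ i) = (Iic i).map ρ.toEmbedding := by
    ext c; simp
  calc i.val + 1 = (univ.filter fun c => ρ.symm c ≤ i).card := by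
        rw [himage, card_map, Fin.card_Iic]
    _ ≤ _ := card_le_card fun c hc => by
        simp only [mem_filter, mem_univ, true_and] at hc ⊢
        exact ((isParkingPerm_iff.mp hρ c).1).trans hc

lemma IsParkingPerm.unique {ρ ρ' : Perm (Fin n)} (h : IsParkingPerm f ρ)
    (h' : IsParkingPerm f ρ') : ρ = ρ' := by
  ext s
  have := congrFun (Option.some_inj.mp (h.symm.trans h')) s
  rw [Option.some_inj.mp this]

end Parking

theorem avoidsAll_iff_strictAntiOn {n : ℕ} {ρ : Perm (Fin (n + 1))} :
    AvoidsAll ρ [p123, p132, p231] ↔ StrictAntiOn ρ (Set.Iio (Fin.last n)) := by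
  constructor
  · intro h s hs t ht hst
    by_contra hle
    have hlt : ρ s < ρ t := lt_of_le_of_ne (not_lt.mp hle) (ρ.injective.ne hst.ne)
    have hmono : StrictMono ![s, t, Fin.last n] := by
      intro x y hxy
      fin_cases x <;> fin_cases y <;> simp at hxy ⊢ <;> simp_all
    have hsl : ρ (Fin.last n) ≠ ρ s := ρ.injective.ne (ne_of_gt hs)
    have htl : ρ (Fin.last n) ≠ ρ t := ρ.injective.ne (ne_of_gt ht)
    rcases lt_or_gt_of_ne hsl with h1 | h1
    · refine h p231 (by simp) ⟨_, hmono, fun x y => ?_⟩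
      fin_cases x <;> fin_cases y <;> simp [p231] <;> omega
    rcases lt_or_gt_of_ne htl with h2 | h2
    · refine h p132 (by simp) ⟨_, hmono, fun x y => ?_⟩
      fin_cases x <;> fin_cases y <;> simp [p132] <;> omega
    · refine h p123 (by simp) ⟨_, hmono, fun x y => ?_⟩
      fin_cases x <;> fin_cases y <;> simp [p123] <;> omega
  · rintro h σ hσ ⟨g, hg, hpat⟩
    have hσ01 : σ 0 < σ 1 := by
      simp only [List.mem_cons, List.not_mem_nil, or_false] at hσ
      rcases hσ with rfl | rfl | rfl <;> decide
    have hg1 : g 1 < Fin.last n := (hg (by decide : (1 : Fin 3) < 2)).trans_le (Fin.le_last _)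
    have hg0 : g 0 < Fin.last n := (hg (by decide : (0 : Fin 3) < 1)).trans hg1
    exact lt_asymm ((hpat 0 1).mp hσ01) (h hg0 hg1 (hg (by decide)))

section RevWithLast

variable {n : ℕ}

/-- In one-line notation: `n, n - 1, …, 1, 0` with `j` removed, followed by `j`. -/
def revWithLast (j : Fin (n + 1)) : Perm (Fin (n + 1)) :=
  ((Fin.cycleRange j).trans Fin.revPerm).symm

lemma revWithLast_symm_apply_val (j c : Fin (n + 1)) :
    ((revWithLast j).symm c : ℕ) = if c < j then n - 1 - c else if c = j then n else n - c := by
  simp only [revWithLast, symm_symm, trans_apply, Fin.revPerm_apply, Fin.val_rev]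
  rcases lt_trichotomy c j with h | rfl | h
  · rw [Fin.coe_cycleRange_of_lt h, if_pos h]; omega
  · simp
  · rw [Fin.cycleRange_of_gt h, if_neg (lt_asymm h), if_neg h.ne']; omega

@[simp]
lemma revWithLast_symm_self (j : Fin (n + 1)) : (revWithLast j).symm j = Fin.last n :=
  Fin.ext (by simp [revWithLast_symm_apply_val])

@[simp]
lemma revWithLast_last (j : Fin (n + 1)) : revWithLast j (Fin.last n) = j := by
  rw [← revWithLast_symm_self j, apply_symm_apply]

lemma strictAntiOn_revWithLast (j : Fin (n + 1)) :
    StrictAntiOn (revWithLast j) (Set.Iio (Fin.last n)) := by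
  intro s hs t ht hst
  obtain ⟨c, rfl⟩ := (revWithLast j).symm.surjective s
  obtain ⟨d, rfl⟩ := (revWithLast j).symm.surjective t
  simp only [Set.mem_Iio, Fin.lt_def, Fin.val_last, apply_symm_apply,
    revWithLast_symm_apply_val] at hs ht hst ⊢
  split_ifs at hs ht hst <;> omega

lemma revWithLast_lt_iff {j s : Fin (n + 1)} (hs : s < Fin.last n) :
    revWithLast j s < j ↔ Fin.rev j ≤ s := by
  obtain ⟨c, rfl⟩ := (revWithLast j).symm.surjective s
  simp only [Fin.lt_def, Fin.le_def, Fin.val_last, Fin.val_rev, apply_symm_apply,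
    revWithLast_symm_apply_val] at hs ⊢
  split_ifs at hs ⊢ <;> omega

end RevWithLast

lemma ParksAt.eq_of_strictAntiOn {n : ℕ} {f : Fin (n + 1) → Fin (n + 1)}
    {ρ : Perm (Fin (n + 1))} (hρ : StrictAntiOn ρ (Set.Iio (Fin.last n))) {c : Fin (n + 1)}
    (hc : ρ.symm c < Fin.last n) (h : ParksAt f ρ c) : f c = ρ.symm c := by
  by_contra hne
  have hlt := lt_of_le_of_ne h.1 hne
  have := hρ (hlt.trans hc) hc hlt
  rw [apply_symm_apply] at this
  exact lt_asymm this (h.2 _ le_rfl hlt)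

theorem isParkingPerm_revWithLast_iff {n : ℕ} {f : Fin (n + 1) → Fin (n + 1)}
    {j : Fin (n + 1)} :
    IsParkingPerm f (revWithLast j) ↔
      (∀ c ≠ j, f c = (revWithLast j).symm c) ∧ Fin.rev j ≤ f j := by
  have hlast : ∀ {c}, (revWithLast j).symm c < Fin.last n ↔ c ≠ j := by
    intro c
    rw [(Fin.le_last _).lt_iff_ne, Ne, ← revWithLast_symm_self j,
      (revWithLast j).symm.injective.eq_iff]
  rw [isParkingPerm_iff]
  constructor
  · intro h
    refine ⟨fun c hc => (h c).eq_of_strictAntiOn (strictAntiOn_revWithLast j) (hlast.mpr hc),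
      not_lt.mp fun hlt => ?_⟩
    have hfj : f j < Fin.last n := hlt.trans_le (Fin.le_last _)
    exact (revWithLast_lt_iff hfj).not.mpr (not_le.mpr hlt)
      ((h j).2 _ le_rfl (by rwa [revWithLast_symm_self]))
  · rintro ⟨hne, hj⟩ c
    rcases eq_or_ne c j with rfl | hc
    · refine ⟨by simp [Fin.le_last], fun s hs hsl => ?_⟩
      rw [revWithLast_symm_self] at hsl
      exact (revWithLast_lt_iff hsl).mpr (hj.trans hs)
    · exact ⟨(hne c hc).le, fun s h1 h2 => absurd h2 (not_lt.mpr (hne c hc ▸ h1))⟩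

def avoidingPermEquivLast (n : ℕ) :
    {ρ : Perm (Fin (n + 1)) // AvoidsAll ρ [p123, p132, p231]} ≃ Fin (n + 1) where
  toFun ρ := ρ.1 (Fin.last n)
  invFun j := ⟨revWithLast j, avoidsAll_iff_strictAntiOn.mpr (strictAntiOn_revWithLast j)⟩
  left_inv ρ := Subtype.ext <| Perm.eq_of_strictAntiOn (strictAntiOn_revWithLast _)
    (avoidsAll_iff_strictAntiOn.mp ρ.2) fun s hs => by
      rw [Set.mem_compl_iff, Set.mem_Iio, not_lt, Fin.last_le_iff] at hs
      simp [hs]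
  right_inv := revWithLast_last

def isParkingPermRevWithLastEquiv {n : ℕ} (j : Fin (n + 1)) :
    {f : Fin (n + 1) → Fin (n + 1) // IsParkingPerm f (revWithLast j)} ≃
      Set.Ici (Fin.rev j) where
  toFun f := ⟨f.1 j, (isParkingPerm_revWithLast_iff.mp f.2).2⟩
  invFun x := ⟨Function.update (revWithLast j).symm j x, isParkingPerm_revWithLast_iff.mpr
    ⟨fun c hc => Function.update_of_ne hc _ _, by rw [Function.update_self]; exact x.2⟩⟩
  left_inv f := by
    ext c
    rcases eq_or_ne c j with rfl | hc
    · simp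
    · simp [hc, (isParkingPerm_revWithLast_iff.mp f.2).1 c hc]
  right_inv x := by simp

theorem card_isParkingPerm_revWithLast {n : ℕ} (j : Fin (n + 1)) :
    Nat.card {f : Fin (n + 1) → Fin (n + 1) // IsParkingPerm f (revWithLast j)} = j + 1 := by
  rw [Nat.card_congr (isParkingPermRevWithLastEquiv j), Nat.card_eq_fintype_card,
    Fintype.card_Ici, Fin.card_Ici, Fin.val_rev]
  omega

theorem stmt7 (n : ℕ) (hn : 1 ≤ n) :
    pk n [p123, p132, p231] = Nat.choose (n + 1) 2 := by
  obtain ⟨n, rfl⟩ := Nat.exists_eq_add_of_le' hn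
  have hpf : ∀ f : Fin (n + 1) → Fin (n + 1),
      (IsParkingFunction f ∧ ∃ ρ, IsParkingPerm f ρ ∧ AvoidsAll ρ [p123, p132, p231]) ↔
        ∃ ρ, IsParkingPerm f ρ ∧ AvoidsAll ρ [p123, p132, p231] :=
    fun f => and_iff_right_of_imp fun ⟨_, hρ, _⟩ => hρ.isParkingFunction
  rw [pk, Nat.card_congr (Equiv.subtypeEquivRight hpf),
    Nat.card_exists_and_eq_card_sigma (P := IsParkingPerm) fun _ _ _ => IsParkingPerm.unique,
    Nat.card_congr (Equiv.sigmaCongrLeft' (avoidingPermEquivLast n)), Nat.card_sigma]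
  exact (Fintype.sum_congr _ _ card_isParkingPerm_revWithLast).trans
    (Fin.sum_val_add_one_eq_choose (n + 1))
end
end

section
/- The number of parking functions of size n whose parking permutation avoids 123, 132, and 213 equals (2/3)·2^n + (1/3)·(−1)^n. -/
/-!
A permutation avoids 123, 132 and 213 exactly when `ρ j < ρ i` whenever `j ≥ i + 2`, i.e. it is
a decreasing sequence of blocks, each a single value or two consecutive values in increasing
order; counting spots shows that this is the same as `n ≤ ρ s + s + 2` and `ρ s + s ≤ n` for
every spot `s`. Car `c` parks at the first spot at or after `f c` not taken by an earlier car, so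
the parking functions with such an outcome are those whose word `w c = f c + c + 2 - n` is a
concatenation of the blocks `1`, `01` and `02`: a `1` is a car alone in its block, a `0` opens a
block of two, and the second car of that block may prefer either of its two spots. Splitting off
the first block gives `T (n + 2) = T (n + 1) + 2 T n` with `T 0 = T 1 = 1`, the Jacobsthal
recursion, whose solution is `(2 ^ (n + 1) + (-1) ^ n) / 3`.
-/

open Finset

noncomputable section

open Function

variable {n : ℕ}

def FarDecreasing (ρ : Equiv.Perm (Fin n)) : Prop :=
  ∀ i j : Fin n, (i : ℕ) + 2 ≤ j → ρ j < ρ i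

lemma strictMono_vecCons_three {α : Type*} [Preorder α] {x y z : α} (hxy : x < y)
    (hyz : y < z) : StrictMono ![x, y, z] := by
  rw [Fin.strictMono_iff_lt_succ]
  intro i
  fin_cases i
  exacts [hxy, hyz]

lemma containsPattern_of_comp_eq {m : ℕ} {π : Equiv.Perm (Fin n)} {σ : Equiv.Perm (Fin m)}
    {g e : Fin m → Fin n} (hg : StrictMono g) (he : StrictMono e)
    (h : ∀ a, π (g a) = e (σ a)) : ContainsPattern π σ :=
  ⟨g, hg, fun a b => by rw [h, h, he.lt_iff_lt]⟩

theorem avoidsAll_iff_farDecreasing (ρ : Equiv.Perm (Fin n)) :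
    AvoidsAll ρ [p123, p132, p213] ↔ FarDecreasing ρ := by
  constructor
  · intro hav i j hij
    -- with `b = i + 1`, the values at `i < b < j` form a 213, 123 or 132
    by_contra! hle
    have hij' : ρ i < ρ j := hle.lt_of_ne (ρ.injective.ne (Fin.ne_of_val_ne (by omega)))
    set b : Fin n := ⟨i + 1, by omega⟩
    have hg := strictMono_vecCons_three (show i < b from Fin.lt_def.2 (by simp [b]))
      (show b < j from Fin.lt_def.2 (by simp only [b]; omega))
    rcases lt_or_gt_of_ne (ρ.injective.ne (show b ≠ i from Fin.ne_of_val_ne (by simp [b])))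
      with hbi | hib
    · refine hav p213 (by simp) (containsPattern_of_comp_eq hg
        (strictMono_vecCons_three hbi hij') fun a => ?_)
      fin_cases a <;> rfl
    · have hbj_ne : b ≠ j := Fin.ne_of_val_ne (by simp only [b]; omega)
      rcases lt_or_gt_of_ne (ρ.injective.ne hbj_ne) with hbj | hjb
      · refine hav p123 (by simp) (containsPattern_of_comp_eq hg
          (strictMono_vecCons_three hib hbj) fun a => ?_)
        fin_cases a <;> rfl
      · refine hav p132 (by simp) (containsPattern_of_comp_eq hg
          (strictMono_vecCons_three hij' hjb) fun a => ?_)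
        fin_cases a <;> rfl
  · rintro hρ σ hσ ⟨g, hg, hiff⟩
    have h01 := Fin.lt_def.1 (hg (show (0 : Fin 3) < 1 by decide))
    have h12 := Fin.lt_def.1 (hg (show (1 : Fin 3) < 2 by decide))
    have hσ02 : σ 0 < σ 2 := by
      simp only [List.mem_cons, List.not_mem_nil, or_false] at hσ
      rcases hσ with rfl | rfl | rfl <;> decide
    exact (hρ _ _ (by omega)).not_gt ((hiff 0 2).1 hσ02)

lemma le_add_of_forall_ge_lt {m : ℕ} {g : Fin n → Fin m} (hg : Injective g) {a : Fin n}
    {c : Fin m} (h : ∀ t, a ≤ t → g t < c) : n ≤ (a : ℕ) + c := by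
  have := card_le_card_of_injOn g (s := Ici a) (t := Iio c)
    (fun t ht => by simpa using h t (by simpa using ht)) hg.injOn
  rw [Fin.card_Ici, Fin.card_Iio] at this
  omega

lemma add_le_of_forall_le_gt {m : ℕ} {g : Fin n → Fin m} (hg : Injective g) {a : Fin n}
    {c : Fin m} (h : ∀ t, t ≤ a → c < g t) : (a : ℕ) + c + 2 ≤ m := by
  have := card_le_card_of_injOn g (s := Iic a) (t := Ioi c)
    (fun t ht => by simpa using h t (by simpa using ht)) hg.injOn
  rw [Fin.card_Iic, Fin.card_Ioi] at this
  have := c.isLt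
  omega

namespace FarDecreasing

variable {ρ : Equiv.Perm (Fin n)}

lemma le_apply_add (hρ : FarDecreasing ρ) (s : Fin n) : n ≤ ρ s + s + 2 := by
  by_cases hs : (s : ℕ) + 2 < n
  · have : n ≤ s + 2 + ρ s := le_add_of_forall_ge_lt ρ.injective (a := ⟨s + 2, hs⟩)
      fun t ht => hρ s t (Fin.le_def.1 ht)
    omega
  · omega

lemma apply_add_le (hρ : FarDecreasing ρ) (s : Fin n) : ρ s + s ≤ n := by
  by_cases hs : 2 ≤ (s : ℕ)
  · have : s - 2 + ρ s + 2 ≤ n :=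
      add_le_of_forall_le_gt ρ.injective (a := ⟨s - 2, by omega⟩) fun t ht =>
        hρ t s (by have : (t : ℕ) ≤ s - 2 := Fin.le_def.1 ht; omega)
    omega
  · have := (ρ s).isLt
    omega

lemma exists_apply_eq_succ (hρ : FarDecreasing ρ) {s : Fin n} (hs : ρ s + s + 2 = n) :
    ∃ t : Fin n, (t : ℕ) = s + 1 ∧ (ρ t : ℕ) = ρ s + 1 := by
  have hs1 : (s : ℕ) + 1 < n := by have := (ρ s).isLt; omega
  set t : Fin n := ⟨s + 1, hs1⟩
  refine ⟨t, rfl, ?_⟩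
  have hup : ρ t + (s + 1) ≤ n := hρ.apply_add_le t
  have hne : (ρ t : ℕ) ≠ ρ s :=
    Fin.val_ne_of_ne (ρ.injective.ne (Fin.ne_of_val_ne (by simp [t])))
  by_contra h
  have : n ≤ s + 1 + ρ s := le_add_of_forall_ge_lt ρ.injective (a := t) fun u hu => by
    rcases (Fin.le_def.1 hu).eq_or_lt with he | hgt
    · rw [show u = t from Fin.ext he.symm, Fin.lt_def]
      omega
    · exact hρ s u (by simp only [t] at hgt; omega)
  omega

lemma exists_apply_eq_pred (hρ : FarDecreasing ρ) {s : Fin n} (hs : ρ s + s = n) :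
    ∃ t : Fin n, (t : ℕ) + 1 = s ∧ (ρ t : ℕ) + 1 = ρ s := by
  have hs0 : 0 < (s : ℕ) := by have := (ρ s).isLt; omega
  set t : Fin n := ⟨s - 1, by omega⟩
  refine ⟨t, by simp only [t]; omega, ?_⟩
  have hlow : n ≤ ρ t + (s - 1) + 2 := hρ.le_apply_add t
  have hne : (ρ t : ℕ) ≠ ρ s :=
    Fin.val_ne_of_ne (ρ.injective.ne (Fin.ne_of_val_ne (by simp only [t]; omega)))
  by_contra h
  have : s - 1 + ρ s + 2 ≤ n := add_le_of_forall_le_gt ρ.injective (a := t) fun u hu => by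
    rcases (Fin.le_def.1 hu).eq_or_lt with he | hlt
    · rw [show u = t from Fin.ext he, Fin.lt_def]
      omega
    · exact hρ u s (by simp only [t] at hlt; omega)
  omega

end FarDecreasing

lemma farDecreasing_of_bounds {ρ : Equiv.Perm (Fin n)}
    (h : ∀ s, n ≤ ρ s + s + 2 ∧ ρ s + s ≤ n) : FarDecreasing ρ := by
  intro i j hij
  have := (h i).1
  have := (h j).2
  have hne : (ρ j : ℕ) ≠ ρ i := fun he => by
    have := congrArg Fin.val (ρ.injective (Fin.ext he)); omega
  rw [Fin.lt_def]
  omega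

section Parking

variable (f : Fin n → Fin n)

lemma parkAux_spec : ∀ k occ, parkAux f k = some occ → ∀ s c, occ s = some c →
    (c : ℕ) < k ∧ f c ≤ s ∧
      ∀ t, f c ≤ t → t < s → ∃ c', occ t = some c' ∧ c' < c := by
  intro k
  induction k with
  | zero =>
    intro occ h s c hc
    simp only [parkAux, Option.some_inj] at h
    simp [← h] at hc
  | succ k ih =>
    intro occ h
    rcases hprev : parkAux f k with _ | occ₀
    · simp [parkAux, hprev] at h
    have ih := ih occ₀ hprev
    by_cases hk : k < n
    swap
    · simp only [parkAux, hprev, Option.bind_some, dif_neg hk, Option.some_inj] at h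
      subst h
      exact fun s c hc => (ih s c hc).imp_left (by omega)
    simp only [parkAux, hprev, Option.bind_some, dif_pos hk] at h
    set S := univ.filter fun s => f ⟨k, hk⟩ ≤ s ∧ occ₀ s = none
    by_cases hS : S.Nonempty
    swap
    · simp [hS] at h
    rw [dif_pos hS, Option.some_inj] at h
    subst h
    obtain ⟨-, hfm, hm⟩ := mem_filter.1 (S.min'_mem hS)
    intro s c hc
    rcases eq_or_ne s (S.min' hS) with rfl | hs
    · rw [update_self, Option.some_inj] at hc
      subst hc
      refine ⟨by simp, hfm, fun t hft hts => ?_⟩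
      have htS : t ∉ S := fun ht => (S.min'_le t ht).not_gt hts
      obtain ⟨c', hc'⟩ := Option.ne_none_iff_exists'.1 fun (ht : occ₀ t = none) =>
        htS (by simp [S, hft, ht])
      exact ⟨c', by rw [update_of_ne hts.ne, hc'], Fin.lt_def.2 (ih t c' hc').1⟩
    · rw [update_of_ne hs] at hc
      obtain ⟨hck, hfc, hocc⟩ := ih s c hc
      refine ⟨by omega, hfc, fun t hft hts => ?_⟩
      obtain ⟨c', hc', hlt⟩ := hocc t hft hts
      have htm : t ≠ S.min' hS := by rintro rfl; simp [hm] at hc'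
      exact ⟨c', by rw [update_of_ne htm, hc'], hlt⟩

variable {f} {ρ : Equiv.Perm (Fin n)}

lemma parkAux_eq_of (h₁ : ∀ c, f c ≤ ρ.symm c)
    (h₂ : ∀ c t, f c ≤ t → t < ρ.symm c → ρ t < c) :
    ∀ k ≤ n, parkAux f k = some fun s => if (ρ s : ℕ) < k then some (ρ s) else none := by
  intro k
  induction k with
  | zero => intro; simp [parkAux]
  | succ k ih =>
    intro (hk : k < n)
    have hmem : ρ.symm ⟨k, hk⟩ ∈ univ.filter fun s => f ⟨k, hk⟩ ≤ s ∧
        (if (ρ s : ℕ) < k then some (ρ s) else none) = none := by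
      simp [h₁]
    rw [parkAux, ih hk.le, Option.bind_some, dif_pos hk]
    beta_reduce
    rw [dif_pos ⟨_, hmem⟩]
    have hmin : (univ.filter fun s => f ⟨k, hk⟩ ≤ s ∧
        (if (ρ s : ℕ) < k then some (ρ s) else none) = none).min' ⟨_, hmem⟩ =
          ρ.symm ⟨k, hk⟩ := by
      refine (min'_eq_iff _ _ _).2 ⟨hmem, fun t ht => not_lt.1 fun hlt => ?_⟩
      simp only [mem_filter, mem_univ, true_and, ite_eq_right_iff, reduceCtorEq, imp_false,
        not_lt] at ht
      exact (h₂ _ t ht.1 hlt).not_ge (Fin.le_def.2 ht.2)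
    rw [hmin, Option.some_inj]
    funext s
    rcases eq_or_ne s (ρ.symm ⟨k, hk⟩) with rfl | hs
    · simp
    · have : (ρ s : ℕ) ≠ k := fun h => hs (ρ.eq_symm_apply.2 (Fin.ext h))
      simp only [update_of_ne hs, show (ρ s : ℕ) < k + 1 ↔ (ρ s : ℕ) < k by omega]

theorem isParkingPerm_iff_s9 : IsParkingPerm f ρ ↔
    (∀ c, f c ≤ ρ.symm c) ∧ ∀ c t, f c ≤ t → t < ρ.symm c → ρ t < c := by
  constructor
  · intro h
    have := parkAux_spec f n _ h
    refine ⟨fun c => (this _ c (by simp)).2.1, fun c t hft hlt => ?_⟩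
    obtain ⟨c', hc', hlt'⟩ := (this _ c (by simp)).2.2 t hft hlt
    rwa [Option.some_inj.1 hc']
  · rintro ⟨h₁, h₂⟩
    simpa [IsParkingPerm] using parkAux_eq_of h₁ h₂ n le_rfl

theorem IsParkingPerm.isParkingFunction_s9 (h : IsParkingPerm f ρ) : IsParkingFunction f := by
  intro i
  have := card_le_card_of_injOn ρ (s := Iic i) (t := univ.filter fun c => f c ≤ i)
    (fun s hs => by
      simpa using ((isParkingPerm_iff_s9.1 h).1 (ρ s)).trans (by simpa using hs))
    ρ.injective.injOn
  rwa [Fin.card_Iic] at this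

end Parking

section Tiling

/-- `w` is a concatenation of the blocks `1`, `01` and `02`. -/
def IsTiling (w : Fin n → Fin 3) : Prop :=
  ∀ i : Fin n, (w i = 0 → ∃ j : Fin n, (j : ℕ) = i + 1 ∧ w j ≠ 0) ∧
    (w i = 2 → ∃ j : Fin n, (j : ℕ) + 1 = i ∧ w j = 0)

variable {f : Fin n → Fin n} {ρ : Equiv.Perm (Fin n)}

lemma IsParkingPerm.le_add_of_lt (hpp : IsParkingPerm f ρ) (hρ : FarDecreasing ρ) {c : Fin n}
    (h : f c < ρ.symm c) : n ≤ f c + c + 1 := by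
  have hlt := Fin.lt_def.1 ((isParkingPerm_iff_s9.1 hpp).2 c (f c) le_rfl h)
  have := hρ.le_apply_add (f c)
  omega

theorem IsParkingPerm.exists_isTiling (hpp : IsParkingPerm f ρ) (hρ : FarDecreasing ρ) :
    ∃ w : Fin n → Fin 3, IsTiling w ∧ ∀ c, (f c : ℕ) + c + 2 = n + w c := by
  have hσ : ∀ c, n ≤ c + ρ.symm c + 2 ∧ (c : ℕ) + ρ.symm c ≤ n := fun c => by
    simpa using And.intro (hρ.le_apply_add (ρ.symm c)) (hρ.apply_add_le (ρ.symm c))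
  have hle : ∀ c, (f c : ℕ) ≤ ρ.symm c :=
    fun c => Fin.le_def.1 ((isParkingPerm_iff_s9.1 hpp).1 c)
  have hjump : ∀ c, (f c : ℕ) < ρ.symm c → n ≤ f c + c + 1 :=
    fun c h => hpp.le_add_of_lt hρ (Fin.lt_def.2 h)
  have hlow : ∀ c, n ≤ (f c : ℕ) + c + 2 := fun c => by
    have := hσ c
    rcases (hle c).lt_or_eq with h | h
    · have := hjump c h; omega
    · omega
  let w : Fin n → Fin 3 := fun c => ⟨f c + c + 2 - n, by have := hle c; have := hσ c; omega⟩
  have hw : ∀ c, (w c : ℕ) = f c + c + 2 - n := fun c => rfl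
  refine ⟨w, fun c => ⟨fun h0 => ?_, fun h2 => ?_⟩,
    fun c => by have := hlow c; rw [hw]; omega⟩
  · have hfc : (f c : ℕ) + c + 2 = n := by
      have : (w c : ℕ) = 0 := congrArg Fin.val h0
      have := hlow c; have := hw c; omega
    have hs : (ρ.symm c : ℕ) = f c := by
      by_contra hne; have := hjump c (by have := hle c; omega); omega
    obtain ⟨t, ht, hρt⟩ := hρ.exists_apply_eq_succ (s := ρ.symm c)
      (by rw [Equiv.apply_symm_apply]; omega)
    rw [Equiv.apply_symm_apply] at hρt
    refine ⟨ρ t, hρt, fun h => ?_⟩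
    have hjt := hjump (ρ t)
    rw [Equiv.symm_apply_apply] at hjt
    have : (w (ρ t) : ℕ) = 0 := congrArg Fin.val h
    have := hw (ρ t)
    omega
  · have hs : (ρ.symm c : ℕ) + c = n := by
      have : (w c : ℕ) = 2 := congrArg Fin.val h2
      have := hle c; have := hσ c; have := hw c; omega
    obtain ⟨t, ht, hρt⟩ := hρ.exists_apply_eq_pred (s := ρ.symm c)
      (by rw [Equiv.apply_symm_apply]; omega)
    rw [Equiv.apply_symm_apply] at hρt
    refine ⟨ρ t, hρt, Fin.ext ?_⟩
    have hlet := hle (ρ t)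
    rw [Equiv.symm_apply_apply] at hlet
    have := hlow (ρ t)
    have := hw (ρ t)
    show (w (ρ t) : ℕ) = 0
    omega

end Tiling

section Construction

variable {w : Fin n → Fin 3}

open Classical in
/-- Car `c` ends up in spot `n - 2 - c + spotOffset w c`: a car right after a `0` is the second
car of a block of two. -/
def spotOffset (w : Fin n → Fin 3) (c : Fin n) : ℕ :=
  if w c = 0 then 0 else if ∃ j : Fin n, (j : ℕ) + 1 = c ∧ w j = 0 then 2 else 1

lemma spotOffset_le_two (c : Fin n) : spotOffset w c ≤ 2 := by
  unfold spotOffset; split_ifs <;> omega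

lemma spotOffset_eq_zero_iff {c : Fin n} : spotOffset w c = 0 ↔ w c = 0 := by
  unfold spotOffset; split_ifs <;> simp_all

lemma spotOffset_succ_eq_ite {a b : Fin n} (hab : (b : ℕ) = a + 1) :
    spotOffset w b = if w b = 0 then 0 else if w a = 0 then 2 else 1 := by
  have : (∃ j : Fin n, (j : ℕ) + 1 = b ∧ w j = 0) ↔ w a = 0 :=
    ⟨fun ⟨j, hj, hwj⟩ => by rwa [show j = a from Fin.ext (by omega)] at hwj,
      fun h => ⟨a, hab.symm, h⟩⟩
  simp only [spotOffset, this]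

lemma IsTiling.val_le_spotOffset (hw : IsTiling w) (c : Fin n) :
    (w c : ℕ) ≤ spotOffset w c := by
  unfold spotOffset
  split_ifs with h0 hj
  · simp [h0]
  · omega
  · obtain ⟨-, h2⟩ := hw c
    have : w c ≠ 2 := fun h => hj (h2 h)
    omega

lemma spotOffset_lt (c : Fin n) : spotOffset w c < c + 2 := by
  unfold spotOffset
  split_ifs with h0 hj
  · omega
  · obtain ⟨j, hj, -⟩ := hj
    omega
  · omega

lemma IsTiling.spotOffset_succ (hw : IsTiling w) {a b : Fin n} (hab : (b : ℕ) = a + 1) :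
    (spotOffset w a = 0 → spotOffset w b = 2) ∧
      (spotOffset w a ≠ 0 → spotOffset w b ≤ 1) := by
  rw [Ne, spotOffset_eq_zero_iff, spotOffset_succ_eq_ite hab]
  refine ⟨fun ha => ?_, fun ha => by split_ifs <;> omega⟩
  obtain ⟨j, hj, hwj⟩ := (hw a).1 ha
  rw [show j = b from Fin.ext (by omega)] at hwj
  simp [ha, hwj]

lemma exists_pred_of_lt_spotOffset {c : Fin n} (h : (w c : ℕ) < spotOffset w c) :
    w c = 1 ∧ ∃ j : Fin n, (j : ℕ) + 1 = c ∧ spotOffset w j = 0 := by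
  unfold spotOffset at h
  split_ifs at h with h0 hj
  · omega
  · obtain ⟨j, hj, hwj⟩ := hj
    exact ⟨by omega, j, hj, spotOffset_eq_zero_iff.2 hwj⟩
  · omega

lemma IsTiling.injective_of_add_eq (hw : IsTiling w) {σ : Fin n → Fin n}
    (hσ : ∀ c, (σ c : ℕ) + c + 2 = n + spotOffset w c) : Injective σ := by
  suffices h : ∀ a b, a < b → σ a ≠ σ b by
    intro a b hab
    by_contra hne
    rcases lt_or_gt_of_ne hne with hlt | hlt
    exacts [h a b hlt hab, h b a hlt hab.symm]
  intro a b hab he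
  have ha := hσ a
  have hb := hσ b
  rw [he] at ha
  have hab' := Fin.lt_def.1 hab
  have := spotOffset_le_two (w := w) a
  have := spotOffset_le_two (w := w) b
  rcases Nat.lt_or_ge ((a : ℕ) + 1) b with hgap | hadj
  · have hm : (a : ℕ) + 1 < n := by omega
    have h1 := hw.spotOffset_succ (a := a) (b := ⟨a + 1, hm⟩) rfl
    have h2 := hw.spotOffset_succ (a := ⟨a + 1, hm⟩) (b := b) (by simp only; omega)
    have := h2.2 (by rw [h1.1 (by omega)]; omega)
    omega
  · have h := hw.spotOffset_succ (a := a) (b := b) (by omega)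
    by_cases h0 : spotOffset w a = 0
    · have := h.1 h0; omega
    · have := h.2 h0; omega

theorem IsTiling.exists_isParkingPerm (hw : IsTiling w) {f : Fin n → Fin n}
    (hf : ∀ c, (f c : ℕ) + c + 2 = n + w c) :
    ∃ ρ, IsParkingPerm f ρ ∧ FarDecreasing ρ := by
  set σ : Fin n → Fin n := fun c => ⟨f c + (spotOffset w c - w c), by
    have := hf c; have := spotOffset_lt (w := w) c; have := hw.val_le_spotOffset c; omega⟩
  have hσ : ∀ c, (σ c : ℕ) + c + 2 = n + spotOffset w c := fun c => by
    have := hf c; have := hw.val_le_spotOffset c; simp only [σ]; omega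
  have hbij : Bijective σ := Finite.injective_iff_bijective.1 (hw.injective_of_add_eq hσ)
  refine ⟨(Equiv.ofBijective σ hbij).symm,
    isParkingPerm_iff_s9.2 ⟨fun c => ?_, fun c t hft hlt => ?_⟩,
    farDecreasing_of_bounds fun s => ?_⟩
  · simp [Fin.le_def, σ]
  · simp only [Equiv.symm_symm, Equiv.ofBijective_apply, Fin.lt_def] at hlt
    rw [Fin.le_def] at hft
    simp only [σ] at hlt
    have hlt' : (w c : ℕ) < spotOffset w c := by omega
    obtain ⟨hc1, j, hj, hj0⟩ := exists_pred_of_lt_spotOffset hlt'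
    have hfc := hf c
    have := hσ j
    have := spotOffset_le_two (w := w) c
    simp only [hc1, Fin.isValue, Fin.val_one] at hfc
    have : t = σ j := Fin.ext (by omega)
    rw [this, Equiv.ofBijective_symm_apply_apply]
    exact Fin.lt_def.2 (by omega)
  · have h := hσ ((Equiv.ofBijective σ hbij).symm s)
    rw [Equiv.ofBijective_apply_symm_apply σ hbij s] at h
    have := spotOffset_le_two (w := w) ((Equiv.ofBijective σ hbij).symm s)
    omega

end Construction

section Counting

lemma IsTiling.le_add {w : Fin n → Fin 3} (hw : IsTiling w) (c : Fin n) :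
    (c : ℕ) + 2 ≤ n + w c := by
  by_cases h0 : w c = 0
  · obtain ⟨j, hj, -⟩ := (hw c).1 h0
    omega
  · omega

lemma IsTiling.exists_add_eq {w : Fin n → Fin 3} (hw : IsTiling w) :
    ∃ f : Fin n → Fin n, ∀ c, (f c : ℕ) + c + 2 = n + w c :=
  ⟨fun c => ⟨w c + n - 2 - c, by
    have := hw.val_le_spotOffset c; have := spotOffset_lt (w := w) c; omega⟩,
    fun c => by have := hw.le_add c; simp only; omega⟩

theorem exists_isParkingPerm_farDecreasing_iff (f : Fin n → Fin n) :
    (∃ ρ, IsParkingPerm f ρ ∧ FarDecreasing ρ) ↔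
      ∃ w : Fin n → Fin 3, IsTiling w ∧ ∀ c, (f c : ℕ) + c + 2 = n + w c :=
  ⟨fun ⟨_, hpp, hρ⟩ => hpp.exists_isTiling hρ,
    fun ⟨_, hw, hf⟩ => hw.exists_isParkingPerm hf⟩

lemma card_fin_cons {α : Type*} [Fintype α] (P : (Fin (n + 1) → α) → Prop) :
    Nat.card {w // P w} = ∑ a, Nat.card {v : Fin n → α // P (Fin.cons a v)} := by
  rw [← Nat.card_sigma]
  exact Nat.card_congr (((Fin.consEquiv fun _ => α).symm.subtypeEquiv fun w => by simp).trans
    (Equiv.subtypeProdEquivSigmaSubtype fun a v => P (Fin.cons a v)))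

lemma isTiling_cons_one (v : Fin n → Fin 3) :
    IsTiling (Fin.cons 1 v : Fin (n + 1) → Fin 3) ↔ IsTiling v := by
  simp [IsTiling, Fin.forall_fin_succ, Fin.exists_fin_succ]

lemma not_isTiling_cons_two (v : Fin n → Fin 3) :
    ¬ IsTiling (Fin.cons 2 v : Fin (n + 1) → Fin 3) := by
  simp [IsTiling, Fin.forall_fin_succ, Fin.exists_fin_succ]

lemma isTiling_cons_zero_cons (b : Fin 3) (v : Fin n → Fin 3) :
    IsTiling (Fin.cons 0 (Fin.cons b v) : Fin (n + 2) → Fin 3) ↔ b ≠ 0 ∧ IsTiling v := by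
  by_cases hb : b = 0 <;> simp [IsTiling, Fin.forall_fin_succ, Fin.exists_fin_succ, hb]

lemma card_isTiling_zero : Nat.card {w : Fin 0 → Fin 3 // IsTiling w} = 1 := by
  simp [IsTiling]

lemma card_isTiling_one : Nat.card {w : Fin 1 → Fin 3 // IsTiling w} = 1 := by
  rw [card_fin_cons, Fin.sum_univ_three]
  simp [IsTiling, Fin.forall_fin_succ]

lemma card_isTiling_add_two (n : ℕ) :
    Nat.card {w : Fin (n + 2) → Fin 3 // IsTiling w} =
      Nat.card {w : Fin (n + 1) → Fin 3 // IsTiling w} +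
        2 * Nat.card {w : Fin n → Fin 3 // IsTiling w} := by
  rw [card_fin_cons, Fin.sum_univ_three, card_fin_cons (fun v => IsTiling (Fin.cons 0 v))]
  simp only [isTiling_cons_one, not_isTiling_cons_two, isTiling_cons_zero_cons,
    Fin.sum_univ_three, ne_eq, not_true_eq_false, false_and, Fin.reduceEq, not_false_eq_true,
    true_and, Nat.card_of_isEmpty, zero_add, add_zero]
  ring

theorem three_mul_card_isTiling (n : ℕ) :
    (3 * Nat.card {w : Fin n → Fin 3 // IsTiling w} : ℤ) = 2 * 2 ^ n + (-1) ^ n := by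
  induction n using Nat.twoStepInduction with
  | zero => simp [card_isTiling_zero]
  | one => simp [card_isTiling_one]
  | more n ih₀ ih₁ =>
    rw [card_isTiling_add_two]
    push_cast
    linear_combination ih₁ + 2 * ih₀

lemma card_exists_isTiling :
    Nat.card {f : Fin n → Fin n //
        ∃ w : Fin n → Fin 3, IsTiling w ∧ ∀ c, (f c : ℕ) + c + 2 = n + w c} =
      Nat.card {w : Fin n → Fin 3 // IsTiling w} := by
  refine (Nat.card_eq_of_bijective (fun w => ⟨_, w.1, w.2, w.2.exists_add_eq.choose_spec⟩)
    ⟨fun w₁ w₂ h => Subtype.ext (funext fun c => Fin.ext ?_), fun f => ?_⟩).symm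
  · have h₁ := w₁.2.exists_add_eq.choose_spec c
    have h₂ := w₂.2.exists_add_eq.choose_spec c
    have : (w₁.2.exists_add_eq.choose c : ℕ) = w₂.2.exists_add_eq.choose c :=
      congrArg (fun f => (f.1 c : ℕ)) h
    omega
  · obtain ⟨f, w, hw, hf⟩ := f
    refine ⟨⟨w, hw⟩, Subtype.ext (funext fun c => Fin.ext ?_)⟩
    have := hw.exists_add_eq.choose_spec c
    have := hf c
    simp only
    omega

theorem pk_eq_card_isTiling (n : ℕ) :
    pk n [p123, p132, p213] = Nat.card {w : Fin n → Fin 3 // IsTiling w} := by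
  rw [pk, ← card_exists_isTiling]
  refine Nat.card_congr (Equiv.subtypeEquivRight fun f => ?_)
  simp only [avoidsAll_iff_farDecreasing, ← exists_isParkingPerm_farDecreasing_iff]
  exact ⟨fun ⟨_, h⟩ => h,
    fun ⟨ρ, hpp, hρ⟩ => ⟨hpp.isParkingFunction_s9, ρ, hpp, hρ⟩⟩

end Counting

theorem stmt9_general (n : ℕ) :
    (3 * pk n [p123, p132, p213] : ℤ) = 2 * 2 ^ n + (-1) ^ n := by
  rw [pk_eq_card_isTiling]
  exact three_mul_card_isTiling n

/-- `pk n (123,132,213) = (2/3)·2^n + (1/3)·(−1)^n`, stated after clearing denominators. -/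
theorem stmt9 (n : ℕ) (hn : 1 ≤ n) :
    (3 * pk n [p123, p132, p213] : ℤ) = 2 * 2 ^ n + (-1) ^ n :=
  stmt9_general n
end
end
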